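/- arXiv:2402.04851 — 2 statements merged into one kernel-verified Lean document; each statement's English description precedes it below -/
import Mathlib

section
/- For every n ≥ 1, the number of grand zigzag knight's paths of size n equals 2·F_{n+1}, where F is the Fibonacci sequence (F_0 = 0, F_1 = 1, F_{n+2} = F_{n+1} + F_n). For n = 0 this number is 1 (the empty path). -/
open Filter Topology

/-- A knight step: `N = (1,2)`, `Nb = (1,-2)`, `E = (2,1)`, `Eb = (2,-1)`. -/
inductive KStep : Type
  | N | Nb | E | Eb

/-- x-component of a step. -/
def KStep.dx : KStep → ℤ
  | .N => 1
  | .Nb => 1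
  | .E => 2
  | .Eb => 2

/-- y-component of a step. -/
def KStep.dy : KStep → ℤ
  | .N => 2
  | .Nb => -2
  | .E => 1
  | .Eb => -1

/-- The size of a path: the x-coordinate of its endpoint. -/
def pathSize (p : List KStep) : ℤ := (p.map KStep.dx).sum

/-- The altitude of a path: the y-coordinate of its endpoint. -/
def pathAlt (p : List KStep) : ℤ := (p.map KStep.dy).sum

/-- Zigzag condition: y-components of consecutive steps have opposite signs. -/
def IsZigzag (p : List KStep) : Prop :=
  List.Chain' (fun a b => a.dy * b.dy < 0) p

/-! ### Auxiliary definitions -/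

/-- weight of a boolean (part size 1 or 2). -/
def bw (b : Bool) : ℤ := if b then 2 else 1

/-- weighted sum of a boolean list (composition into parts 1, 2). -/
def wsum (l : List Bool) : ℤ := (l.map bw).sum

/-- step from sign and size. -/
def stp : Bool → Bool → KStep
  | true, false => .N
  | true, true => .E
  | false, false => .Nb
  | false, true => .Eb

/-- build a zigzag path from initial sign and list of sizes. -/
def build : Bool → List Bool → List KStep
  | _, [] => []
  | b, x :: xs => stp b x :: build (!b) xs

/-- sign of a step. -/
def upb : KStep → Bool
  | .N => true
  | .E => true
  | .Nb => false
  | .Eb => false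

/-- size (is it 2?) of a step. -/
def big : KStep → Bool
  | .N => false
  | .Nb => false
  | .E => true
  | .Eb => true

lemma length_le_wsum (l : List Bool) : (l.length : ℤ) ≤ wsum l := by
  induction l with
  | nil => simp [wsum]
  | cons x xs ih =>
    simp only [wsum, List.map_cons, List.sum_cons, List.length_cons] at *
    have : 1 ≤ bw x := by cases x <;> simp [bw]
    push_cast
    omega

lemma wsum_eq_zero {l : List Bool} (h : wsum l = 0) : l = [] := by
  cases l with
  | nil => rfl
  | cons x xs =>
    exfalso
    have := length_le_wsum (x :: xs)
    rw [h] at this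
    simp at this
    omega

lemma length_le_pathSize (p : List KStep) : (p.length : ℤ) ≤ pathSize p := by
  induction p with
  | nil => simp [pathSize]
  | cons x xs ih =>
    simp only [pathSize, List.map_cons, List.sum_cons, List.length_cons] at *
    have : 1 ≤ x.dx := by cases x <;> simp [KStep.dx]
    push_cast
    omega

lemma pathSize_eq_zero {p : List KStep} (h : pathSize p = 0) : p = [] := by
  cases p with
  | nil => rfl
  | cons x xs =>
    exfalso
    have := length_le_pathSize (x :: xs)
    rw [h] at this
    simp at this
    omega

lemma pathSize_build (b : Bool) (l : List Bool) : pathSize (build b l) = wsum l := by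
  induction l generalizing b with
  | nil => rfl
  | cons x xs ih =>
    simp only [build, pathSize, wsum, List.map_cons, List.sum_cons] at *
    have h : (stp b x).dx = bw x := by cases b <;> cases x <;> rfl
    rw [h]
    exact congrArg (bw x + ·) (ih (!b))

lemma zig_build (b : Bool) (l : List Bool) : IsZigzag (build b l) := by
  induction l generalizing b with
  | nil => exact List.isChain_nil
  | cons x xs ih =>
    simp only [build, IsZigzag] at *
    apply List.isChain_cons.mpr
    refine ⟨?_, ih (!b)⟩
    intro y hy
    cases xs with
    | nil => simp [build] at hy
    | cons z zs =>
      simp only [build, List.head?_cons, Option.mem_def, Option.some.injEq] at hy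
      subst hy
      cases b <;> cases x <;> cases z <;> decide

lemma map_big_build (b : Bool) (l : List Bool) : (build b l).map big = l := by
  induction l generalizing b with
  | nil => rfl
  | cons x xs ih =>
    simp only [build, List.map_cons]
    rw [ih (!b)]
    have : big (stp b x) = x := by cases b <;> cases x <;> rfl
    rw [this]

lemma build_inj {b b' : Bool} {l l' : List Bool} (hne : l ≠ [])
    (h : build b l = build b' l') : b = b' ∧ l = l' := by
  have hl : l = l' := by
    have := congrArg (List.map big) h
    rwa [map_big_build, map_big_build] at this
  subst hl
  refine ⟨?_, rfl⟩
  cases l with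
  | nil => exact absurd rfl hne
  | cons x xs =>
    simp only [build, List.cons.injEq] at h
    have := h.1
    cases b <;> cases b' <;> cases x <;> first | rfl | (exfalso; exact KStep.noConfusion this)

lemma upb_of_chain {s y : KStep} (h : s.dy * y.dy < 0) : upb y = !upb s := by
  cases s <;> cases y <;> first | rfl | (exfalso; revert h; decide)

lemma build_map_big : ∀ (p : List KStep), IsZigzag p → ∀ b : Bool,
    (∀ s ∈ p.head?, upb s = b) → build b (p.map big) = p := by
  intro p
  induction p with
  | nil => intro _ b _; rfl
  | cons s t ih =>
    intro hz b hb
    have hsb : upb s = b := hb s rfl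
    simp only [List.map_cons, build]
    have h1 : stp b (big s) = s := by subst hsb; cases s <;> rfl
    rw [h1]
    have hzt : IsZigzag t := (List.isChain_cons.mp hz).2
    have hbt : ∀ y ∈ t.head?, upb y = !b := by
      intro y hy
      have hrel := (List.isChain_cons.mp hz).1 y hy
      rw [upb_of_chain hrel, hsb]
    rw [ih hzt (!b) hbt]

/-- The compositions of `n` into parts 1 and 2, as a subtype. -/
abbrev Comp (n : ℤ) := {l : List Bool // wsum l = n}

instance compFinite (n : ℤ) : Finite (Comp n) := by
  rcases le_or_gt 0 n with hn | hn
  · have : {l : List Bool | wsum l = n} ⊆ {l : List Bool | l.length ≤ n.toNat} := by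
      intro l hl
      simp only [Set.mem_setOf_eq] at *
      have := length_le_wsum l
      omega
    exact ((List.finite_length_le Bool n.toNat).subset this).to_subtype
  · have : {l : List Bool | wsum l = n} ⊆ (∅ : Set (List Bool)) := by
      intro l hl
      simp only [Set.mem_setOf_eq] at hl
      have := length_le_wsum l
      exfalso; omega
    exact ((Set.finite_empty.subset this)).to_subtype

lemma comp_card : ∀ n : ℕ, Nat.card (Comp n) = Nat.fib (n + 1) := by
  have h0 : Nat.card (Comp 0) = 1 := by
    have : Unique (Comp (0 : ℤ)) := {
      default := ⟨[], rfl⟩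
      uniq := by rintro ⟨l, hl⟩; ext1; exact wsum_eq_zero hl }
    exact Nat.card_unique
  have h1 : Nat.card (Comp 1) = 1 := by
    have : Unique (Comp (1 : ℤ)) := {
      default := ⟨[false], rfl⟩
      uniq := by
        rintro ⟨l, hl⟩
        ext1
        cases l with
        | nil => simp [wsum] at hl
        | cons x xs =>
          simp only [wsum, List.map_cons, List.sum_cons] at hl
          have hx : 1 ≤ bw x := by cases x <;> simp [bw]
          have hxs : (xs.length : ℤ) ≤ wsum xs := length_le_wsum xs
          have hb2 : bw x = 1 ∨ bw x = 2 := by cases x <;> simp [bw]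
          have hxs0 : wsum xs = 0 := by
            have := length_le_wsum xs
            rcases hb2 with h | h <;> rw [h] at hl <;> unfold wsum at * <;> omega
          have hx1 : bw x = 1 := by unfold wsum at hxs0; omega
          have : x = false := by cases x <;> simp [bw] at hx1 ⊢
          subst this
          show false :: xs = [false]
          rw [wsum_eq_zero hxs0] }
    exact Nat.card_unique
  have hrec : ∀ n : ℕ, Nat.card (Comp (n + 2)) = Nat.card (Comp (n + 1)) + Nat.card (Comp n) := by
    intro n
    have : Nat.card (Comp ((n : ℤ) + 1) ⊕ Comp (n : ℤ)) = Nat.card (Comp ((n : ℤ) + 2)) := by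
      apply Nat.card_eq_of_bijective (fun s => match s with
        | Sum.inl ⟨l, hl⟩ => ⟨false :: l, by simp [wsum, bw] at *; omega⟩
        | Sum.inr ⟨l, hl⟩ => ⟨true :: l, by simp [wsum, bw] at *; omega⟩)
      constructor
      · rintro (⟨l, hl⟩ | ⟨l, hl⟩) (⟨l', hl'⟩ | ⟨l', hl'⟩) h <;>
          simp only [Subtype.mk.injEq, List.cons.injEq] at h <;> simp_all
      · rintro ⟨l, hl⟩
        cases l with
        | nil => simp [wsum] at hl; omega
        | cons x xs =>
          cases x with
          | false =>
            refine ⟨Sum.inl ⟨xs, ?_⟩, rfl⟩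
            simp [wsum, bw] at hl ⊢
            omega
          | true =>
            refine ⟨Sum.inr ⟨xs, ?_⟩, rfl⟩
            simp [wsum, bw] at hl ⊢
            omega
    rw [← this, Nat.card_sum]
  intro n
  induction n using Nat.twoStepInduction with
  | zero => simpa using h0
  | one => simpa using h1
  | more n ih1 ih2 =>
    have hc2 : ((n + 2 : ℕ) : ℤ) = (n : ℤ) + 2 := by push_cast; ring
    have hc1 : ((n + 1 : ℕ) : ℤ) = (n : ℤ) + 1 := by push_cast; ring
    rw [hc2, hrec n, ← hc1, ih1, ih2]
    have h3 : Nat.fib (n + 2 + 1) = Nat.fib (n + 1) + Nat.fib (n + 1 + 1) := Nat.fib_add_two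
    omega

lemma path_card (n : ℕ) (hn : 1 ≤ n) :
    Nat.card {p : List KStep // pathSize p = (n : ℤ) ∧ IsZigzag p} = 2 * Nat.fib (n + 1) := by
  have key : Nat.card (Bool × Comp (n : ℤ)) =
      Nat.card {p : List KStep // pathSize p = (n : ℤ) ∧ IsZigzag p} := by
    apply Nat.card_eq_of_bijective (fun s =>
      ⟨build s.1 s.2.1, by rw [pathSize_build, s.2.2], zig_build _ _⟩)
    constructor
    · rintro ⟨b, l, hl⟩ ⟨b', l', hl'⟩ h
      simp only [Subtype.mk.injEq] at h
      have hne : l ≠ [] := by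
        intro h0
        subst h0
        simp [wsum] at hl
        omega
      obtain ⟨hb, hll⟩ := build_inj hne h
      simp [hb, hll]
    · rintro ⟨p, hp, hz⟩
      have hpne : p ≠ [] := by
        intro h0
        subst h0
        simp [pathSize] at hp
        omega
      obtain ⟨s, t, rfl⟩ := List.exists_cons_of_ne_nil hpne
      refine ⟨⟨upb s, (s :: t).map big, ?_⟩, ?_⟩
      · rw [show wsum (List.map big (s :: t)) = pathSize (build (upb s) ((s :: t).map big)) from
          (pathSize_build _ _).symm, build_map_big _ hz _ (by intro y hy; simp only [List.head?_cons, Option.mem_def, Option.some.injEq] at hy; subst hy; rfl), hp]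
      · ext1
        exact build_map_big _ hz _ (by intro y hy; simp only [List.head?_cons, Option.mem_def, Option.some.injEq] at hy; subst hy; rfl)
  rw [← key, Nat.card_prod, Nat.card_eq_fintype_card, Fintype.card_bool, comp_card n]

theorem stmt5 (z : ℕ → ℕ)
    (hz : ∀ n : ℕ, z n =
      Nat.card {p : List KStep // pathSize p = (n : ℤ) ∧ IsZigzag p}) :
    z 0 = 1 ∧ ∀ n : ℕ, 1 ≤ n → z n = 2 * Nat.fib (n + 1) := by
  constructor
  · rw [hz 0]
    have : Unique {p : List KStep // pathSize p = ((0 : ℕ) : ℤ) ∧ IsZigzag p} := {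
      default := ⟨[], by simp [pathSize, IsZigzag]; exact List.isChain_nil⟩
      uniq := by
        rintro ⟨p, hp, _⟩
        ext1
        exact pathSize_eq_zero (by simpa using hp) }
    exact Nat.card_unique
  · intro n hn
    rw [hz n]
    exact path_card n hn
end

section
/- Let n ∈ ℕ and k ∈ ℤ with n ≢ k (mod 2), and let i be an odd natural number. Then |Z^{i,+}_{n,k}| = C((i+1)/2, (n−k−i)/2 + 1)·C((i−1)/2, (n+k−i)/2 − 1) and |Z^{i,−}_{n,k}| = C((i−1)/2, (n−k−i)/2 − 1)·C((i+1)/2, (n+k−i)/2 + 1), with the convention that a binomial coefficient C(a,b) is 0 whenever b < 0 or b > a. -/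
open Filter Topology

/-- The path is empty or its first step is an up-step (`N` or `E`). -/
def StartsUp (p : List KStep) : Prop := ∀ s ∈ p.head?, 0 < s.dy

/-- The path is empty or its first step is a down-step (`Nb` or `Eb`). -/
def StartsDown (p : List KStep) : Prop := ∀ s ∈ p.head?, s.dy < 0

/-- Binomial coefficient on integers with the convention that it is `0`
whenever `b < 0` or `b > a`. -/
def zchoose (a b : ℤ) : ℕ :=
  if 0 ≤ b ∧ b ≤ a then Nat.choose a.toNat b.toNat else 0

deriving instance DecidableEq for KStep

/-! ### Auxiliary definitions -/

def UpSet (i : ℕ) (n k : ℤ) : Type :=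
  {p : List KStep // pathSize p = n ∧ pathAlt p = k ∧ IsZigzag p ∧ StartsUp p ∧ p.length = i}

def DownSet (i : ℕ) (n k : ℤ) : Type :=
  {p : List KStep // pathSize p = n ∧ pathAlt p = k ∧ IsZigzag p ∧ StartsDown p ∧ p.length = i}

instance : Finite KStep :=
  Finite.of_injective
    (fun s => match s with | .N => (0 : Fin 4) | .Nb => 1 | .E => 2 | .Eb => 3)
    (by intro a b; cases a <;> cases b <;> decide)

instance (i : ℕ) (n k : ℤ) : Finite (UpSet i n k) := by
  have : Finite {l : List KStep | l.length = i} := (List.finite_length_eq KStep i).to_subtype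
  apply Finite.of_injective
    (fun p : UpSet i n k => (⟨p.1, p.2.2.2.2.2⟩ : {l : List KStep | l.length = i}))
  intro a b h
  exact Subtype.ext (congrArg (Subtype.val : {l : List KStep | l.length = i} → List KStep) h)

instance (i : ℕ) (n k : ℤ) : Finite (DownSet i n k) := by
  have : Finite {l : List KStep | l.length = i} := (List.finite_length_eq KStep i).to_subtype
  apply Finite.of_injective
    (fun p : DownSet i n k => (⟨p.1, p.2.2.2.2.2⟩ : {l : List KStep | l.length = i}))
  intro a b h
  exact Subtype.ext (congrArg (Subtype.val : {l : List KStep | l.length = i} → List KStep) h)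

/-! ### Reflection -/

def KStep.refl : KStep → KStep
  | .N => .Nb
  | .Nb => .N
  | .E => .Eb
  | .Eb => .E

lemma refl_dx (s : KStep) : s.refl.dx = s.dx := by cases s <;> rfl
lemma refl_dy (s : KStep) : s.refl.dy = -s.dy := by cases s <;> rfl
lemma refl_refl (s : KStep) : s.refl.refl = s := by cases s <;> rfl

lemma size_map_refl (p : List KStep) : pathSize (p.map KStep.refl) = pathSize p := by
  induction p with
  | nil => rfl
  | cons h t ih =>
    simp only [pathSize, List.map_cons, List.sum_cons] at *
    rw [refl_dx, ih]

lemma alt_map_refl (p : List KStep) : pathAlt (p.map KStep.refl) = -pathAlt p := by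
  induction p with
  | nil => rfl
  | cons h t ih =>
    simp only [pathAlt, List.map_cons, List.sum_cons] at *
    rw [refl_dy, ih]; ring

lemma zig_map_refl (p : List KStep) : IsZigzag (p.map KStep.refl) ↔ IsZigzag p := by
  unfold IsZigzag List.Chain'
  rw [List.isChain_map]
  constructor <;> exact fun h => h.imp (fun {a b} hab => by
    simp only [refl_dy] at *; nlinarith)

lemma up_map_refl (p : List KStep) : StartsUp (p.map KStep.refl) ↔ StartsDown p := by
  unfold StartsUp StartsDown
  cases p with
  | nil => simp
  | cons h t =>
    simp only [List.map_cons, List.head?_cons, Option.mem_def, Option.some.injEq, forall_eq',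
      refl_dy]
    omega

lemma down_map_refl (p : List KStep) : StartsDown (p.map KStep.refl) ↔ StartsUp p := by
  unfold StartsUp StartsDown
  cases p with
  | nil => simp
  | cons h t =>
    simp only [List.map_cons, List.head?_cons, Option.mem_def, Option.some.injEq, forall_eq',
      refl_dy]
    omega

def downEquiv (i : ℕ) (n k : ℤ) : DownSet i n k ≃ UpSet i n (-k) where
  toFun p := ⟨p.1.map KStep.refl, by
    obtain ⟨hs, ha, hz, hd, hl⟩ := p.2
    refine ⟨by rw [size_map_refl, hs], by rw [alt_map_refl, ha], (zig_map_refl _).2 hz,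
      (up_map_refl _).2 hd, by rw [List.length_map, hl]⟩⟩
  invFun p := ⟨p.1.map KStep.refl, by
    obtain ⟨hs, ha, hz, hd, hl⟩ := p.2
    refine ⟨by rw [size_map_refl, hs], by rw [alt_map_refl, ha]; ring, (zig_map_refl _).2 hz,
      (down_map_refl _).2 hd, by rw [List.length_map, hl]⟩⟩
  left_inv p := by
    apply Subtype.ext
    show List.map KStep.refl (List.map KStep.refl p.1) = p.1
    rw [List.map_map, show KStep.refl ∘ KStep.refl = id from funext refl_refl, List.map_id]
  right_inv p := by
    apply Subtype.ext
    show List.map KStep.refl (List.map KStep.refl p.1) = p.1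
    rw [List.map_map, show KStep.refl ∘ KStep.refl = id from funext refl_refl, List.map_id]

/-! ### Cons decomposition -/

lemma pathSize_cons (s : KStep) (t : List KStep) : pathSize (s :: t) = s.dx + pathSize t := by
  simp [pathSize]

lemma pathAlt_cons (s : KStep) (t : List KStep) : pathAlt (s :: t) = s.dy + pathAlt t := by
  simp [pathAlt]

def consFun (i : ℕ) (n k : ℤ) :
    DownSet i (n - 1) (k - 2) ⊕ DownSet i (n - 2) (k - 1) → UpSet (i + 1) n k
  | Sum.inl t => ⟨KStep.N :: t.1, by
      obtain ⟨hs, ha, hz, hd, hl⟩ := t.2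
      refine ⟨by rw [pathSize_cons, hs]; simp [KStep.dx],
        by rw [pathAlt_cons, ha]; simp [KStep.dy],
        List.isChain_cons.2 ⟨fun y hy => by
          have := hd y hy
          show KStep.N.dy * y.dy < 0
          show (2 : ℤ) * y.dy < 0
          omega, hz⟩,
        fun s hs' => by
          simp only [List.head?_cons, Option.mem_def, Option.some.injEq] at hs'
          subst hs'; decide,
        by simp [hl]⟩⟩
  | Sum.inr t => ⟨KStep.E :: t.1, by
      obtain ⟨hs, ha, hz, hd, hl⟩ := t.2
      refine ⟨by rw [pathSize_cons, hs]; simp [KStep.dx],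
        by rw [pathAlt_cons, ha]; simp [KStep.dy],
        List.isChain_cons.2 ⟨fun y hy => by
          have := hd y hy
          show KStep.E.dy * y.dy < 0
          show (1 : ℤ) * y.dy < 0
          omega, hz⟩,
        fun s hs' => by
          simp only [List.head?_cons, Option.mem_def, Option.some.injEq] at hs'
          subst hs'; decide,
        by simp [hl]⟩⟩

lemma consFun_bijective (i : ℕ) (n k : ℤ) : Function.Bijective (consFun i n k) := by
  constructor
  · rintro (a | a) (b | b) h
    all_goals
      have h' := congrArg (Subtype.val : UpSet (i + 1) n k → List KStep) h
    all_goals simp only [consFun, List.cons.injEq] at h'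
    · exact congrArg Sum.inl (Subtype.ext h'.2)
    · exact KStep.noConfusion h'.1
    · exact KStep.noConfusion h'.1
    · exact congrArg Sum.inr (Subtype.ext h'.2)
  · rintro ⟨p, hs, ha, hz, hu, hl⟩
    cases p with
    | nil => simp at hl
    | cons h t =>
      have hh : 0 < h.dy := hu h (by simp)
      have htl : t.length = i := by simpa using hl
      have hzt : IsZigzag t := (List.isChain_cons.1 hz).2
      have hdt : StartsDown t := by
        intro s hs'
        have := (List.isChain_cons.1 hz).1 s hs'
        nlinarith
      cases h with
      | Nb => exact absurd hh (by decide)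
      | Eb => exact absurd hh (by decide)
      | N =>
        refine ⟨Sum.inl ⟨t, ?_, ?_, hzt, hdt, htl⟩, rfl⟩
        · rw [pathSize_cons, show KStep.N.dx = 1 from rfl] at hs; omega
        · rw [pathAlt_cons, show KStep.N.dy = 2 from rfl] at ha; omega
      | E =>
        refine ⟨Sum.inr ⟨t, ?_, ?_, hzt, hdt, htl⟩, rfl⟩
        · rw [pathSize_cons, show KStep.E.dx = 2 from rfl] at hs; omega
        · rw [pathAlt_cons, show KStep.E.dy = 1 from rfl] at ha; omega

lemma card_cons (i : ℕ) (n k : ℤ) :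
    Nat.card (UpSet (i + 1) n k) =
      Nat.card (DownSet i (n - 1) (k - 2)) + Nat.card (DownSet i (n - 2) (k - 1)) := by
  rw [Nat.card_congr (Equiv.ofBijective _ (consFun_bijective i n k)).symm, Nat.card_sum]

/-! ### zchoose lemmas -/

lemma zchoose_zero (b : ℤ) : zchoose 0 b = if b = 0 then 1 else 0 := by
  unfold zchoose
  rcases eq_or_ne b 0 with rfl | hb
  · norm_num
  · rw [if_neg (by omega), if_neg hb]

lemma zchoose_pascal (c b : ℤ) (hc : 0 ≤ c) :
    zchoose (c + 1) b = zchoose c b + zchoose c (b - 1) := by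
  obtain ⟨d, rfl⟩ : ∃ d : ℕ, c = (d : ℤ) := ⟨c.toNat, by omega⟩
  rcases lt_or_ge b 1 with hb | hb
  · rcases eq_or_lt_of_le (show b ≤ 0 by omega) with rfl | hb0
    · unfold zchoose
      rw [if_pos (by omega), if_pos (by omega), if_neg (by omega)]
      simp
    · unfold zchoose
      rw [if_neg (by omega), if_neg (by omega), if_neg (by omega)]
  obtain ⟨m, rfl⟩ : ∃ m : ℕ, b = (m : ℤ) + 1 := ⟨(b - 1).toNat, by omega⟩
  have h1 : ((d : ℤ) + 1).toNat = d + 1 := by omega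
  have h2 : ((m : ℤ) + 1).toNat = m + 1 := by omega
  have h3 : ((m : ℤ) + 1 - 1).toNat = m := by omega
  have h4 : ((d : ℤ)).toNat = d := by omega
  unfold zchoose
  rcases le_or_gt ((m : ℤ) + 1) ((d : ℤ) + 1) with hmd | hmd
  · have hfst : (if 0 ≤ (m : ℤ) + 1 ∧ (m : ℤ) + 1 ≤ (d : ℤ) + 1 then
        Nat.choose ((d : ℤ) + 1).toNat ((m : ℤ) + 1).toNat else 0) =
        Nat.choose (d + 1) (m + 1) := by
      rw [if_pos (by omega), h1, h2]
    have hmid : (if 0 ≤ (m : ℤ) + 1 ∧ (m : ℤ) + 1 ≤ (d : ℤ) then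
        Nat.choose ((d : ℤ)).toNat ((m : ℤ) + 1).toNat else 0) = Nat.choose d (m + 1) := by
      split_ifs with h
      · rw [h4, h2]
      · rw [Nat.choose_eq_zero_of_lt (by omega)]
    have hlst : (if 0 ≤ (m : ℤ) + 1 - 1 ∧ (m : ℤ) + 1 - 1 ≤ (d : ℤ) then
        Nat.choose ((d : ℤ)).toNat ((m : ℤ) + 1 - 1).toNat else 0) = Nat.choose d m := by
      rw [if_pos (by omega), h4, h3]
    rw [hfst, hmid, hlst, Nat.choose_succ_succ']
    omega
  · rw [if_neg (by omega), if_neg (by omega), if_neg (by omega)]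

/-! ### The main counting lemma -/

lemma card_up_zero (n k : ℤ) :
    Nat.card (UpSet 0 n k) = if n = 0 ∧ k = 0 then 1 else 0 := by
  split_ifs with h
  · obtain ⟨rfl, rfl⟩ := h
    have : Unique (UpSet 0 0 0) := by
      refine ⟨⟨⟨[], by refine ⟨rfl, rfl, ?_, ?_, rfl⟩ <;> simp [IsZigzag, StartsUp, List.Chain', List.isChain_nil]⟩⟩, ?_⟩
      rintro ⟨p, hs, ha, hz, hu, hl⟩
      apply Subtype.ext
      exact List.length_eq_zero_iff.1 hl
    exact Nat.card_unique
  · have : IsEmpty (UpSet 0 n k) := by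
      constructor
      rintro ⟨p, hs, ha, hz, hu, hl⟩
      have : p = [] := List.length_eq_zero_iff.1 hl
      subst this
      exact h ⟨hs.symm, ha.symm⟩
    exact Nat.card_of_isEmpty

lemma upCard (i : ℕ) : ∀ (n k a b : ℤ),
    2 * a = n - k - i + 2 * ((i : ℤ) % 2) →
    2 * b = n + k - i - 2 * ((i : ℤ) % 2) →
    Nat.card (UpSet i n k) = zchoose (((i : ℤ) + 1) / 2) a * zchoose ((i : ℤ) / 2) b := by
  induction i with
  | zero =>
    intro n k a b ha hb
    simp only [Nat.cast_zero] at ha hb ⊢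
    rw [card_up_zero]
    rw [show ((0 : ℤ) + 1) / 2 = 0 by decide, show (0 : ℤ) / 2 = 0 by decide,
      zchoose_zero, zchoose_zero]
    by_cases h : n = 0 ∧ k = 0
    · rw [if_pos h, if_pos (show a = 0 by omega), if_pos (show b = 0 by omega)]
    · rw [if_neg h]
      rcases eq_or_ne a 0 with rfl | ha0
      · rcases eq_or_ne b 0 with rfl | hb0
        · exact absurd ⟨by omega, by omega⟩ h
        · rw [if_neg hb0, Nat.mul_zero]
      · rw [if_neg ha0, Nat.zero_mul]
  | succ i ih =>
    intro n k a b ha hb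
    rw [card_cons]
    rw [Nat.card_congr (downEquiv i (n - 1) (k - 2)), Nat.card_congr (downEquiv i (n - 2) (k - 1))]
    push_cast at ha hb
    rw [ih (n - 1) (-(k - 2)) b a (by omega) (by omega),
        ih (n - 2) (-(k - 1)) b (a - 1) (by omega) (by omega)]
    rw [← Nat.left_distrib]
    rw [← zchoose_pascal ((i : ℤ) / 2) a (by omega)]
    rw [show (i : ℤ) / 2 + 1 = ((i : ℤ) + 1 + 1) / 2 by omega]
    push_cast
    ring

/-! ### The theorem -/

theorem stmt10 (n i : ℕ) (k : ℤ) (hpar : (n : ℤ) % 2 ≠ k % 2) (hi : Odd i) :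
    Nat.card {p : List KStep //
        pathSize p = (n : ℤ) ∧ pathAlt p = k ∧ IsZigzag p ∧ StartsUp p ∧
          p.length = i} =
      zchoose (((i : ℤ) + 1) / 2) (((n : ℤ) - k - i) / 2 + 1) *
        zchoose (((i : ℤ) - 1) / 2) (((n : ℤ) + k - i) / 2 - 1) ∧
    Nat.card {p : List KStep //
        pathSize p = (n : ℤ) ∧ pathAlt p = k ∧ IsZigzag p ∧ StartsDown p ∧
          p.length = i} =
      zchoose (((i : ℤ) - 1) / 2) (((n : ℤ) - k - i) / 2 - 1) *
        zchoose (((i : ℤ) + 1) / 2) (((n : ℤ) + k - i) / 2 + 1) := by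
  obtain ⟨j, hj⟩ := hi
  have him : (i : ℤ) % 2 = 1 := by subst hj; push_cast; omega
  have hdiv : (i : ℤ) / 2 = ((i : ℤ) - 1) / 2 := by omega
  constructor
  · have := upCard i n k (((n : ℤ) - k - i) / 2 + 1) (((n : ℤ) + k - i) / 2 - 1)
      (by omega) (by omega)
    rw [hdiv] at this
    exact this
  · have heq : Nat.card {p : List KStep //
        pathSize p = (n : ℤ) ∧ pathAlt p = k ∧ IsZigzag p ∧ StartsDown p ∧
          p.length = i} = Nat.card (UpSet i n (-k)) :=
      Nat.card_congr (downEquiv i n k)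
    rw [heq, upCard i n (-k) (((n : ℤ) + k - i) / 2 + 1) (((n : ℤ) - k - i) / 2 - 1)
      (by omega) (by omega), hdiv, Nat.mul_comm]
end
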